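/- arXiv:2402.12246 — 5 statements merged into one kernel-verified Lean document; each statement's English description precedes it below -/
import Mathlib

section
/- For any symmetric function c : Fin l × Fin l → {+1, −1} with c(i,i) = +1, there exists a number of qubits p and Pauli-string observables A₁,…,A_l on p qubits such that for every pair i < j, A_i A_j = c(i,j) · A_j A_i. In particular, one may take p equal to the number of pairs (i,j) with i < j and c(i,j) = −1, and assign to the q-th such anticommuting pair (i_q, j_q) the operators having σ_x (respectively σ_z) on qubit q and identity elsewhere. -/
open Matrix

noncomputable def pauli : Fin 4 → Matrix (Fin 2) (Fin 2) ℂ :=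
  ![1, !![0, 1; 1, 0], !![0, -Complex.I; Complex.I, 0], !![1, 0; 0, -1]]

/-- A `p`-qubit Pauli string: a sign `±1` times a tensor product of Pauli matrices. -/
def IsPauliString {p : ℕ} (A : Matrix (Fin p → Fin 2) (Fin p → Fin 2) ℂ) : Prop :=
  ∃ (s : ℂ) (f : Fin p → Fin 4), (s = 1 ∨ s = -1) ∧
    ∀ x y : Fin p → Fin 2, A x y = s * ∏ i, pauli (f i) (x i) (y i)

lemma pauliMul_entry {p : ℕ} (f g : Fin p → Fin 4) (x y : Fin p → Fin 2) :
    ((Matrix.of fun x y : Fin p → Fin 2 => ∏ q, pauli (f q) (x q) (y q)) *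
     (Matrix.of fun x y : Fin p → Fin 2 => ∏ q, pauli (g q) (x q) (y q))) x y
      = ∏ q, (pauli (f q) * pauli (g q)) (x q) (y q) := by
  simp only [Matrix.mul_apply, Matrix.of_apply, ← Finset.prod_mul_distrib]
  rw [Fintype.prod_sum (fun q a => pauli (f q) (x q) a * pauli (g q) a (y q))]

lemma pauli_anticomm_13 : pauli 1 * pauli 3 = (-1 : ℂ) • (pauli 3 * pauli 1) := by
  simp [pauli]

theorem stmt2 {l : ℕ} (c : Fin l → Fin l → ℤ)
    (hval : ∀ i j, c i j = 1 ∨ c i j = -1)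
    (hsymm : ∀ i j, c i j = c j i)
    (hdiag : ∀ i, c i i = 1) :
    ∃ A : Fin l →
        Matrix
          (Fin ((Finset.univ.filter
              (fun ij : Fin l × Fin l => ij.1 < ij.2 ∧ c ij.1 ij.2 = -1)).card) → Fin 2)
          (Fin ((Finset.univ.filter
              (fun ij : Fin l × Fin l => ij.1 < ij.2 ∧ c ij.1 ij.2 = -1)).card) → Fin 2) ℂ,
      (∀ i, IsPauliString (A i)) ∧
      ∀ i j : Fin l, i < j → A i * A j = (c i j : ℂ) • (A j * A i) := by
  classical
  set S := (Finset.univ.filter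
      (fun ij : Fin l × Fin l => ij.1 < ij.2 ∧ c ij.1 ij.2 = -1)) with hS
  set p := S.card with hp
  let e : Fin p → Fin l × Fin l := fun q => (S.equivFin.symm q : Fin l × Fin l)
  have he_mem : ∀ q, e q ∈ S := fun q => (S.equivFin.symm q).2
  have he_lt : ∀ q, (e q).1 < (e q).2 := fun q => (Finset.mem_filter.1 (he_mem q)).2.1
  let F : Fin l → Fin p → Fin 4 := fun i q =>
    if i = (e q).1 then 1 else if i = (e q).2 then 3 else 0
  refine ⟨fun i => Matrix.of fun x y => ∏ q, pauli (F i q) (x q) (y q), ?_, ?_⟩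
  · intro i
    exact ⟨1, F i, Or.inl rfl, fun x y => by simp⟩
  · intro i j hij
    -- per-qubit sign
    let s : Fin p → ℂ := fun q => if e q = (i, j) then -1 else 1
    have key : ∀ q, pauli (F i q) * pauli (F j q) = s q • (pauli (F j q) * pauli (F i q)) := by
      intro q
      by_cases hq : e q = (i, j)
      · have h1 : F i q = 1 := by simp [F, hq]
        have h2 : F j q = 3 := by
          have : j ≠ i := (ne_of_lt hij).symm
          simp [F, hq, this]
        simp only [h1, h2, s, hq, if_pos rfl]
        exact pauli_anticomm_13
      · have hcomm : pauli (F i q) * pauli (F j q) = pauli (F j q) * pauli (F i q) := by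
          by_cases hi1 : i = (e q).1
          · by_cases hj2 : j = (e q).2
            · exact absurd (Prod.ext hi1.symm hj2.symm) hq
            · have hj1 : j ≠ (e q).1 := fun h => (ne_of_lt hij).symm (h.trans hi1.symm)
              have : F j q = 0 := by simp [F, hj1, hj2]
              simp [this, pauli]
          · by_cases hi2 : i = (e q).2
            · -- then F i q = 3; F j q must be 0 since j > i = (e q).2 > (e q).1
              have hj1 : j ≠ (e q).1 := fun h =>
                lt_asymm hij (by rw [h, hi2]; exact he_lt q)
              have hj2 : j ≠ (e q).2 := fun h => (ne_of_lt hij) (hi2.trans h.symm)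
              have : F j q = 0 := by simp [F, hj1, hj2]
              simp [this, pauli]
            · have : F i q = 0 := by simp [F, hi1, hi2]
              simp [this, pauli]
        rw [hcomm]
        simp [s, hq]
    have hsign : ∏ q, s q = (c i j : ℂ) := by
      have : ∏ q, s q = ∏ z ∈ S, (if z = (i, j) then (-1 : ℂ) else 1) := by
        rw [← Finset.prod_coe_sort S (fun z => if z = (i, j) then (-1 : ℂ) else 1)]
        exact Fintype.prod_equiv S.equivFin.symm s _ (fun q => rfl)
      rw [this, Finset.prod_ite_eq' S (i, j) (fun _ => (-1 : ℂ))]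
      by_cases hmem : (i, j) ∈ S
      · have : c i j = -1 := (Finset.mem_filter.1 hmem).2.2
        simp [hmem, this]
      · have : c i j = 1 := by
          rcases hval i j with h | h
          · exact h
          · exact absurd (Finset.mem_filter.2 ⟨Finset.mem_univ _, hij, h⟩) hmem
        simp [hmem, this]
    ext x y
    rw [Matrix.smul_apply, pauliMul_entry, pauliMul_entry, ← hsign]
    rw [smul_eq_mul, ← Finset.prod_mul_distrib]
    refine Finset.prod_congr rfl fun q _ => ?_
    rw [key q]
    simp [mul_comm]
end

section
/- The Mermin–Peres magic square system has a solution by two-qubit Pauli observables: the nine operators A₁ = σ_z⊗I, A₂ = I⊗σ_z, A₃ = σ_z⊗σ_z, A₄ = I⊗σ_x, A₅ = σ_x⊗I, A₆ = σ_x⊗σ_x, A₇ = σ_z⊗σ_x, A₈ = σ_x⊗σ_z, A₉ = σ_y⊗σ_y are Hermitian involutions; the three operators within each of the six constraint sets (rows {1,2,3},{4,5,6},{7,8,9} and columns {1,4,7},{2,5,8},{3,6,9}) pairwise commute; the product over each row and over each of the first two columns equals I⊗I; and A₃A₆A₉ = −I⊗I. -/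
open Matrix Kronecker

noncomputable def sx : Matrix (Fin 2) (Fin 2) ℂ := !![0, 1; 1, 0]
noncomputable def sy : Matrix (Fin 2) (Fin 2) ℂ := !![0, -Complex.I; Complex.I, 0]
noncomputable def sz : Matrix (Fin 2) (Fin 2) ℂ := !![1, 0; 0, -1]

/-- The nine observables of the Mermin–Peres magic square. -/
noncomputable def MP : Fin 9 → Matrix (Fin 2 × Fin 2) (Fin 2 × Fin 2) ℂ :=
  ![sz ⊗ₖ 1, 1 ⊗ₖ sz, sz ⊗ₖ sz,
    1 ⊗ₖ sx, sx ⊗ₖ 1, sx ⊗ₖ sx,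
    sz ⊗ₖ sx, sx ⊗ₖ sz, sy ⊗ₖ sy]

/-- The six constraint sets: three rows and three columns. -/
def mpTriples : List (Fin 9 × Fin 9 × Fin 9) :=
  [(0, 1, 2), (3, 4, 5), (6, 7, 8), (0, 3, 6), (1, 4, 7), (2, 5, 8)]

lemma hxx : sx * sx = 1 := by
  ext i j; fin_cases i <;> fin_cases j <;>
    simp [sx, Matrix.mul_apply, Fin.sum_univ_two, Matrix.one_apply]

lemma hyy : sy * sy = 1 := by
  ext i j; fin_cases i <;> fin_cases j <;>
    simp [sy, Matrix.mul_apply, Fin.sum_univ_two, Matrix.one_apply, Complex.I_mul_I]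

lemma hzz : sz * sz = 1 := by
  ext i j; fin_cases i <;> fin_cases j <;>
    simp [sz, Matrix.mul_apply, Fin.sum_univ_two, Matrix.one_apply]

lemma hzx : sz * sx = Complex.I • sy := by
  ext i j; fin_cases i <;> fin_cases j <;>
    simp [sz, sx, sy, Matrix.mul_apply, Fin.sum_univ_two]

lemma hxz : sx * sz = (-Complex.I) • sy := by
  ext i j; fin_cases i <;> fin_cases j <;>
    simp [sz, sx, sy, Matrix.mul_apply, Fin.sum_univ_two]

lemma hxy : sx * sy = Complex.I • sz := by
  ext i j; fin_cases i <;> fin_cases j <;>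
    simp [sz, sx, sy, Matrix.mul_apply, Fin.sum_univ_two]

lemma hyx : sy * sx = (-Complex.I) • sz := by
  ext i j; fin_cases i <;> fin_cases j <;>
    simp [sz, sx, sy, Matrix.mul_apply, Fin.sum_univ_two]

lemma hyz : sy * sz = Complex.I • sx := by
  ext i j; fin_cases i <;> fin_cases j <;>
    simp [sz, sx, sy, Matrix.mul_apply, Fin.sum_univ_two]

lemma hzy : sz * sy = (-Complex.I) • sx := by
  ext i j; fin_cases i <;> fin_cases j <;>
    simp [sz, sx, sy, Matrix.mul_apply, Fin.sum_univ_two]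

lemma hxH : sxᴴ = sx := by
  ext i j; fin_cases i <;> fin_cases j <;> simp [sx]

lemma hyH : syᴴ = sy := by
  ext i j; fin_cases i <;> fin_cases j <;> simp [sy]

lemma hzH : szᴴ = sz := by
  ext i j; fin_cases i <;> fin_cases j <;> simp [sz]

lemma kronH (A B : Matrix (Fin 2) (Fin 2) ℂ) : (A ⊗ₖ B)ᴴ = Aᴴ ⊗ₖ Bᴴ := by
  ext ⟨i, j⟩ ⟨k, l⟩
  simp [Matrix.conjTranspose_apply, Matrix.kroneckerMap_apply, mul_comm]

lemma oneH : (1 : Matrix (Fin 2) (Fin 2) ℂ)ᴴ = 1 := Matrix.conjTranspose_one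

lemma negk (A B : Matrix (Fin 2) (Fin 2) ℂ) : (-A) ⊗ₖ B = -(A ⊗ₖ B) := by
  ext ⟨i, j⟩ ⟨k, l⟩; simp [Matrix.kroneckerMap_apply]

lemma kneg (A B : Matrix (Fin 2) (Fin 2) ℂ) : A ⊗ₖ (-B) = -(A ⊗ₖ B) := by
  ext ⟨i, j⟩ ⟨k, l⟩; simp [Matrix.kroneckerMap_apply]

@[simp] lemma MP0 : MP 0 = sz ⊗ₖ 1 := rfl
@[simp] lemma MP1 : MP 1 = 1 ⊗ₖ sz := rfl
@[simp] lemma MP2 : MP 2 = sz ⊗ₖ sz := rfl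
@[simp] lemma MP3 : MP 3 = 1 ⊗ₖ sx := rfl
@[simp] lemma MP4 : MP 4 = sx ⊗ₖ 1 := rfl
@[simp] lemma MP5 : MP 5 = sx ⊗ₖ sx := rfl
@[simp] lemma MP6 : MP 6 = sz ⊗ₖ sx := rfl
@[simp] lemma MP7 : MP 7 = sx ⊗ₖ sz := rfl
@[simp] lemma MP8 : MP 8 = sy ⊗ₖ sy := rfl

theorem stmt5 :
    (∀ i, (MP i).IsHermitian ∧ MP i * MP i = 1) ∧
    (∀ t ∈ mpTriples,
      Commute (MP t.1) (MP t.2.1) ∧ Commute (MP t.1) (MP t.2.2) ∧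
      Commute (MP t.2.1) (MP t.2.2)) ∧
    (∀ t ∈ [((0 : Fin 9), (1 : Fin 9), (2 : Fin 9)), (3, 4, 5), (6, 7, 8), (0, 3, 6), (1, 4, 7)],
      MP t.1 * MP t.2.1 * MP t.2.2 = 1) ∧
    MP 2 * MP 5 * MP 8 = -1 := by
  refine ⟨?_, ?_, ?_, ?_⟩
  · intro i
    fin_cases i <;>
      exact ⟨by simp [MP0, MP1, MP2, MP3, MP4, MP5, MP6, MP7, MP8, Matrix.IsHermitian, kronH, hxH, hyH, hzH, oneH],
        by simp [MP0, MP1, MP2, MP3, MP4, MP5, MP6, MP7, MP8, ← Matrix.mul_kronecker_mul, hxx, hyy, hzz, Matrix.one_kronecker_one]⟩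
  · intro t ht
    fin_cases ht <;>
      refine ⟨?_, ?_, ?_⟩ <;>
      · show _ * _ = _ * _
        simp [MP0, MP1, MP2, MP3, MP4, MP5, MP6, MP7, MP8, ← Matrix.mul_kronecker_mul, hxx, hyy, hzz, hzx, hxz, hxy, hyx, hyz, hzy,
          Matrix.smul_kronecker, Matrix.kronecker_smul, smul_smul, negk, kneg, smul_neg, neg_smul, neg_neg, one_smul, Complex.I_mul_I]
  · intro t ht
    fin_cases ht <;>
      simp [MP0, MP1, MP2, MP3, MP4, MP5, MP6, MP7, MP8, ← Matrix.mul_kronecker_mul, Matrix.one_kronecker_one, hxx, hyy, hzz,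
        hzx, hxz, hxy, hyx, hyz, hzy, Matrix.smul_kronecker, Matrix.kronecker_smul,
        smul_smul, Matrix.smul_mul, Matrix.mul_smul, negk, kneg, smul_neg, neg_smul, neg_neg, one_smul, Complex.I_mul_I]
  · simp [MP0, MP1, MP2, MP3, MP4, MP5, MP6, MP7, MP8, ← Matrix.mul_kronecker_mul, Matrix.one_kronecker_one, hxx, hyy, hzz,
      hzx, hxz, hxy, hyx, hyz, hzy, Matrix.smul_kronecker, Matrix.kronecker_smul,
      smul_smul, Matrix.smul_mul, Matrix.mul_smul, negk, kneg, smul_neg, neg_smul, neg_neg, one_smul, Complex.I_mul_I]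
end

section
/- For every even integer n ≥ 4, the permutation-graph binary constraint system on the complete graph with n vertices has no classical solution over {+1, −1}. -/
/-!
For four distinct vertices `u, v, s, t`, the constraint `x y z = 1` together with
`a a y = 1` gives `z_{st} = x_{st} a_s a_t`. Comparing the `c`-triangle with the `b`-triangle,
all the `x`'s cancel and what remains is `a_u a_v a_s a_t = 1`. For `n = 4` this already
contradicts `∏ a_v = -1`; for `n ≥ 5` it forces all `a_v` to be equal (swap one vertex of a
quadruple), so `∏ a_v = a_0 ^ n = 1` because `n` is even.
-/

/-- Four pairwise distinct vertices. -/
def Dist4 {n : ℕ} (u v s t : Fin n) : Prop :=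
  u ≠ v ∧ u ≠ s ∧ u ≠ t ∧ v ≠ s ∧ v ≠ t ∧ s ≠ t

/-- The permutation-graph BCS on the complete graph with `n` vertices, with a
classical (sign-valued) assignment `a, x, y, z, b, c`. -/
def PermBCSSol (n : ℕ) (a : Fin n → ℤ) (x y z : Fin n → Fin n → ℤ)
    (b c : Fin n → Fin n → Fin n → Fin n → ℤ) : Prop :=
  (∀ u v, u ≠ v → a u * a v * y u v = 1) ∧
  (∀ u v, u ≠ v → x u v * y u v * z u v = 1) ∧
  (∀ u v s t, Dist4 u v s t → x u v * x s t * b u v s t = 1) ∧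
  (∀ u v s t, Dist4 u v s t → x u v * z s t * c u v s t = 1) ∧
  (∀ u v s t, Dist4 u v s t → b u v s t * b v s u t * b s u v t = 1) ∧
  (∀ u v s t, Dist4 u v s t → c u v s t * c v s u t * c s u v t = 1) ∧
  (∏ v, a v = -1)

lemma Int.eq_mul_of_mul_mul_eq_one {p q r : ℤ} (h : p * q * r = 1) : r = p * q := by
  have hr : r * r = 1 := Int.isUnit_mul_self (IsUnit.of_mul_eq_one_right _ h)
  calc r = p * q * r * r := by rw [h, one_mul]
    _ = p * q := by rw [mul_assoc, hr, mul_one]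

lemma Dist4.rotate {n : ℕ} {u v s t : Fin n} (h : Dist4 u v s t) : Dist4 v s u t :=
  let ⟨huv, hus, hut, hvs, hvt, hst⟩ := h
  ⟨hvs, huv.symm, hvt, hus.symm, hst, hut⟩

lemma Fin.exists_three_ne_of_five_le {n : ℕ} (hn : 5 ≤ n) (v w : Fin n) :
    ∃ p q r : Fin n, p ≠ q ∧ p ≠ r ∧ q ≠ r ∧ (p ≠ v ∧ p ≠ w) ∧ (q ≠ v ∧ q ≠ w) ∧
      (r ≠ v ∧ r ≠ w) := by
  have hcard : 3 ≤ ({v, w}ᶜ : Finset (Fin n)).card := by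
    rw [Finset.card_compl, Fintype.card_fin]
    have := Finset.card_le_two (a := v) (b := w)
    omega
  obtain ⟨T, hTsub, hT⟩ := Finset.exists_subset_card_eq hcard
  obtain ⟨p, q, r, hpq, hpr, hqr, rfl⟩ := Finset.card_eq_three.mp hT
  have hout : ∀ e ∈ ({p, q, r} : Finset (Fin n)), e ≠ v ∧ e ≠ w := fun e he => by
    simpa [not_or] using hTsub he
  exact ⟨p, q, r, hpq, hpr, hqr, hout p (by simp), hout q (by simp), hout r (by simp)⟩

namespace PermBCSSol

variable {n : ℕ} {a : Fin n → ℤ} {x y z : Fin n → Fin n → ℤ}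
  {b c : Fin n → Fin n → Fin n → Fin n → ℤ}

lemma y_eq (sol : PermBCSSol n a x y z b c) {u v : Fin n} (h : u ≠ v) : y u v = a u * a v :=
  Int.eq_mul_of_mul_mul_eq_one (sol.1 u v h)

lemma z_eq (sol : PermBCSSol n a x y z b c) {u v : Fin n} (h : u ≠ v) :
    z u v = x u v * (a u * a v) := by
  rw [← sol.y_eq h]
  exact Int.eq_mul_of_mul_mul_eq_one (sol.2.1 u v h)

lemma a_mul_self (sol : PermBCSSol n a x y z b c) {u v : Fin n} (h : u ≠ v) : a u * a u = 1 :=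
  Int.isUnit_mul_self (IsUnit.of_mul_eq_one _ ((mul_assoc _ _ _).symm.trans (sol.1 u v h)))

lemma prod_four_eq_one (sol : PermBCSSol n a x y z b c) {u v s t : Fin n}
    (hD : Dist4 u v s t) : a u * a v * a s * a t = 1 := by
  have ⟨_, _, hut, _, hvt, hst⟩ := hD
  have hb := sol.2.2.2.2.1 u v s t hD
  have hc := sol.2.2.2.2.2.1 u v s t hD
  have b_eq : ∀ {p q r : Fin n}, Dist4 p q r t → b p q r t = x p q * x r t :=
    fun h => Int.eq_mul_of_mul_mul_eq_one (sol.2.2.1 _ _ _ _ h)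
  have c_eq : ∀ {p q r : Fin n}, Dist4 p q r t → c p q r t = x p q * z r t :=
    fun h => Int.eq_mul_of_mul_mul_eq_one (sol.2.2.2.1 _ _ _ _ h)
  rw [b_eq hD, b_eq hD.rotate, b_eq hD.rotate.rotate] at hb
  rw [c_eq hD, c_eq hD.rotate, c_eq hD.rotate.rotate, sol.z_eq hst, sol.z_eq hut,
    sol.z_eq hvt] at hc
  have ht := sol.a_mul_self hst.symm
  linear_combination hc - (a u * a v * a s * a t * (a t * a t)) * hb -
    (a u * a v * a s * a t) * ht

lemma a_eq_of_five_le (sol : PermBCSSol n a x y z b c) (hn : 5 ≤ n) (v w : Fin n) :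
    a v = a w := by
  obtain ⟨p, q, r, hpq, hpr, hqr, ⟨hpv, hpw⟩, ⟨hqv, hqw⟩, ⟨hrv, hrw⟩⟩ :=
    Fin.exists_three_ne_of_five_le hn v w
  have hv := sol.prod_four_eq_one ⟨hpv, hpq, hpr, hqv.symm, hrv.symm, hqr⟩
  have hw := sol.prod_four_eq_one ⟨hpw, hpq, hpr, hqw.symm, hrw.symm, hqr⟩
  linear_combination a w * hv - a v * hw

lemma prod_eq_one_of_even (sol : PermBCSSol n a x y z b c) (hn : 5 ≤ n) (heven : Even n) :
    ∏ v, a v = 1 := by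
  obtain ⟨k, rfl⟩ := heven
  let v₀ : Fin (k + k) := ⟨0, by omega⟩
  have hsq : a v₀ * a v₀ = 1 := sol.a_mul_self (v := ⟨1, by omega⟩) (by simp [v₀])
  rw [Finset.prod_congr rfl fun v _ => sol.a_eq_of_five_le hn v v₀, Finset.prod_const,
    Finset.card_univ, Fintype.card_fin, ← two_mul, pow_mul, sq, hsq, one_pow]

end PermBCSSol

theorem stmt10 (n : ℕ) (hn : 4 ≤ n) (heven : Even n) :
    ¬ ∃ (a : Fin n → ℤ) (x y z : Fin n → Fin n → ℤ)
        (b c : Fin n → Fin n → Fin n → Fin n → ℤ),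
      (∀ v, a v = 1 ∨ a v = -1) ∧
      (∀ u v, x u v = 1 ∨ x u v = -1) ∧
      (∀ u v, y u v = 1 ∨ y u v = -1) ∧
      (∀ u v, z u v = 1 ∨ z u v = -1) ∧
      (∀ u v s t, b u v s t = 1 ∨ b u v s t = -1) ∧
      (∀ u v s t, c u v s t = 1 ∨ c u v s t = -1) ∧
      PermBCSSol n a x y z b c := by
  rintro ⟨a, x, y, z, b, c, -, -, -, -, -, -, sol⟩
  have hprod : ∏ v, a v = 1 := by
    obtain rfl | hn5 := hn.eq_or_lt
    · rw [Fin.prod_univ_four]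
      exact sol.prod_four_eq_one (by simp [Dist4])
    · exact sol.prod_eq_one_of_even hn5 heven
  rw [sol.2.2.2.2.2.2] at hprod
  exact absurd hprod (by decide)
end

section
/- Let n ≥ 4 and label the vertices of the complete graph by 1,…,n. In the symmetric group S_{2n}, setting a_v = (2v−1 2v) (a transposition) and x_{uv} = (2u−1 2v−1)(2u 2v), and defining y_{uv} = a_u a_v, z_{uv} = x_{uv} y_{uv}, b_{uv|st} = x_{uv} x_{st}, c_{uv|st} = x_{uv} z_{st}, all the constraints of the permutation-graph BCS hold with −1 replaced by the central element J = (1 2)(3 4)⋯(2n−1 2n), and moreover all variables appearing in a common constraint commute, and J ≠ e. -/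
/-- Vertex `v` ↦ point `2v` (0-indexed version of `2v − 1`). -/
def idx0 {n : ℕ} (v : Fin n) : Fin (2 * n) := ⟨2 * v.1, by have := v.isLt; omega⟩
/-- Vertex `v` ↦ point `2v + 1` (0-indexed version of `2v`). -/
def idx1 {n : ℕ} (v : Fin n) : Fin (2 * n) := ⟨2 * v.1 + 1, by have := v.isLt; omega⟩

/-- `a_v = (2v−1  2v)`. -/
def aPerm {n : ℕ} (v : Fin n) : Equiv.Perm (Fin (2 * n)) := Equiv.swap (idx0 v) (idx1 v)
/-- `x_{uv} = (2u−1  2v−1)(2u  2v)`. -/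
def xPerm {n : ℕ} (u v : Fin n) : Equiv.Perm (Fin (2 * n)) :=
  Equiv.swap (idx0 u) (idx0 v) * Equiv.swap (idx1 u) (idx1 v)
/-- `y_{uv} = a_u a_v`. -/
def yPerm {n : ℕ} (u v : Fin n) : Equiv.Perm (Fin (2 * n)) := aPerm u * aPerm v
/-- `z_{uv} = x_{uv} y_{uv}`. -/
def zPerm {n : ℕ} (u v : Fin n) : Equiv.Perm (Fin (2 * n)) := xPerm u v * yPerm u v
/-- `b_{uv|st} = x_{uv} x_{st}`. -/
def bPerm {n : ℕ} (u v s t : Fin n) : Equiv.Perm (Fin (2 * n)) := xPerm u v * xPerm s t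
/-- `c_{uv|st} = x_{uv} z_{st}`. -/
def cPerm {n : ℕ} (u v s t : Fin n) : Equiv.Perm (Fin (2 * n)) := xPerm u v * zPerm s t

def Jfun (n : ℕ) (k : Fin (2 * n)) : Fin (2 * n) :=
  ⟨2 * (k.1 / 2) + (1 - k.1 % 2), by have := k.isLt; omega⟩

/-- `J = (1 2)(3 4)⋯(2n−1 2n)`, swapping each pair `{2i, 2i+1}` (0-indexed). -/
def Jperm (n : ℕ) : Equiv.Perm (Fin (2 * n)) :=
  Function.Involutive.toPerm (Jfun n)
    (by intro k; apply Fin.ext; simp only [Jfun]; omega)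

/-!
Read the point `2v − 1` of `{1, …, 2n}` as `(v, 0)` and `2v` as `(v, 1)`. Then `x_{uv}` moves the
first coordinate by the transposition `(u v)`, `a_v` flips the second coordinate over `v`, and `J`
flips it everywhere. Checking on these pairs gives `x_{uv} a_w = a_{(u v) w} x_{uv}`, so `x_{uv}`
commutes with `y_{uv} = a_u a_v`, and reduces the `b`-triangle to the relation
`(uv)(st) · (vs)(ut) · (su)(vt) = e` of the Klein four-group.

All variables are involutions. If `p`, `q` are commuting involutions, then `p`, `q`, `pq` commute
and `p q (pq) = e`, which covers the constraints with a defined third variable. For the two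
triangles, three involutions with `p q r = e` commute pairwise, since `r = (pq)⁻¹ = qp` and
`r = r⁻¹ = pq`.
-/

open Equiv Finset

section Involutions

variable {G : Type*} [Group G] {p q r : G}

theorem Commute.mul_self_eq_one (h : Commute p q) (hp : p * p = 1) (hq : q * q = 1) :
    p * q * (p * q) = 1 := by
  rw [h.symm.mul_mul_mul_comm, hp, hq, one_mul]

theorem Commute.pairwise_commute_mul (h : Commute p q) : List.Pairwise Commute [p, q, p * q] := by
  simp [h, (Commute.refl p).mul_right h, h.symm.mul_right (Commute.refl q)]

theorem pairwise_commute_of_mul_mul_eq_one (hp : p * p = 1) (hq : q * q = 1) (hr : r * r = 1)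
    (h : p * q * r = 1) : List.Pairwise Commute [p, q, r] := by
  have hr_qp : r = q * p := by
    rw [eq_inv_of_mul_eq_one_right h, mul_inv_rev, inv_eq_of_mul_eq_one_right hp,
      inv_eq_of_mul_eq_one_right hq]
  have hr_pq : r = p * q := by
    rw [← inv_eq_of_mul_eq_one_right hr, hr_qp, mul_inv_rev, inv_eq_of_mul_eq_one_right hp,
      inv_eq_of_mul_eq_one_right hq]
  have hpq : Commute p q := hr_pq.symm.trans hr_qp
  rw [hr_pq]
  exact hpq.pairwise_commute_mul

theorem Commute.mul_self_eq_one_and_pairwise_commute (h : Commute p q) (hp : p * p = 1)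
    (hq : q * q = 1) :
    p * q * (p * q) = 1 ∧ List.Pairwise Commute [p, q, p * q] :=
  ⟨h.mul_self_eq_one hp hq, h.pairwise_commute_mul⟩

end Involutions

theorem Equiv.prod_doubleTranspositions_eq_one {α : Type*} [DecidableEq α] {u v s t : α}
    (huv : u ≠ v) (hus : u ≠ s) (hut : u ≠ t) (hvs : v ≠ s) (hvt : v ≠ t) (hst : s ≠ t) :
    swap u v * swap s t * (swap v s * swap u t) * (swap s u * swap v t) = 1 := by
  ext w
  by_cases hwu : w = u <;> by_cases hwv : w = v <;> by_cases hws : w = s <;>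
    by_cases hwt : w = t <;> simp_all [swap_apply_def, eq_comm]

theorem Equiv.swap_commute_swap {α : Type*} [DecidableEq α] {u v s t : α} (hus : u ≠ s)
    (hut : u ≠ t) (hvs : v ≠ s) (hvt : v ≠ t) : Commute (swap u v) (swap s t) := by
  ext w
  by_cases hwu : w = u <;> by_cases hwv : w = v <;> by_cases hws : w = s <;>
    by_cases hwt : w = t <;> simp_all [swap_apply_def, eq_comm]

section Points

variable {n : ℕ}

theorem idx0_injective : Function.Injective (idx0 (n := n)) := fun v w h => by
  simpa [idx0, Fin.ext_iff] using h

theorem idx1_injective : Function.Injective (idx1 (n := n)) := fun v w h => by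
  simpa [idx1, Fin.ext_iff] using h

theorem idx0_ne_idx1 (v w : Fin n) : idx0 v ≠ idx1 w := by
  simp only [idx0, idx1, ne_eq, Fin.ext_iff]
  omega

theorem exists_idx (k : Fin (2 * n)) : ∃ w, k = idx0 w ∨ k = idx1 w := by
  refine ⟨⟨k / 2, by omega⟩, ?_⟩
  simp only [idx0, idx1, Fin.ext_iff]
  omega

theorem Equiv.Perm.ext_idx {f g : Perm (Fin (2 * n))} (h0 : ∀ w, f (idx0 w) = g (idx0 w))
    (h1 : ∀ w, f (idx1 w) = g (idx1 w)) : f = g :=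
  Equiv.ext fun k => by
    obtain ⟨w, rfl | rfl⟩ := exists_idx k
    exacts [h0 w, h1 w]

theorem aPerm_apply_idx0 (v w : Fin n) :
    aPerm v (idx0 w) = if w = v then idx1 w else idx0 w := by
  split_ifs with h
  · subst h; exact swap_apply_left _ _
  · exact swap_apply_of_ne_of_ne (idx0_injective.ne h) (idx0_ne_idx1 w v)

theorem aPerm_apply_idx1 (v w : Fin n) :
    aPerm v (idx1 w) = if w = v then idx0 w else idx1 w := by
  split_ifs with h
  · subst h; exact swap_apply_right _ _
  · exact swap_apply_of_ne_of_ne (idx0_ne_idx1 v w).symm (idx1_injective.ne h)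

theorem xPerm_apply_idx0 (u v w : Fin n) : xPerm u v (idx0 w) = idx0 (swap u v w) := by
  rw [xPerm, Perm.mul_apply, swap_apply_of_ne_of_ne (idx0_ne_idx1 w u) (idx0_ne_idx1 w v)]
  exact idx0_injective.swap_apply u v w

theorem xPerm_apply_idx1 (u v w : Fin n) : xPerm u v (idx1 w) = idx1 (swap u v w) := by
  rw [xPerm, Perm.mul_apply, idx1_injective.swap_apply u v w,
    swap_apply_of_ne_of_ne (idx0_ne_idx1 u _).symm (idx0_ne_idx1 v _).symm]

theorem Jperm_apply_idx0 (w : Fin n) : Jperm n (idx0 w) = idx1 w := by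
  change Jfun n (idx0 w) = idx1 w
  simp only [Jfun, idx0, idx1, Fin.ext_iff]
  omega

theorem Jperm_apply_idx1 (w : Fin n) : Jperm n (idx1 w) = idx0 w := by
  change Jfun n (idx1 w) = idx0 w
  simp only [Jfun, idx0, idx1, Fin.ext_iff]
  omega

end Points

section Relations

variable {n : ℕ}

theorem aPerm_mul_self (v : Fin n) : aPerm v * aPerm v = 1 := swap_mul_self _ _

theorem aPerm_commute (u v : Fin n) : Commute (aPerm u) (aPerm v) := by
  refine Perm.ext_idx (fun w => ?_) (fun w => ?_) <;>
    by_cases hu : w = u <;> by_cases hv : w = v <;>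
    simp_all [Perm.mul_apply, aPerm_apply_idx0, aPerm_apply_idx1]

theorem xPerm_mul_self (u v : Fin n) : xPerm u v * xPerm u v = 1 :=
  Perm.ext_idx (fun w => by simp [xPerm_apply_idx0]) (fun w => by simp [xPerm_apply_idx1])

theorem xPerm_mul_aPerm (u v w : Fin n) :
    xPerm u v * aPerm w = aPerm (swap u v w) * xPerm u v := by
  refine Perm.ext_idx (fun w' => ?_) (fun w' => ?_) <;>
    simp only [Perm.mul_apply, aPerm_apply_idx0, aPerm_apply_idx1, xPerm_apply_idx0,
      xPerm_apply_idx1, (swap u v).injective.eq_iff] <;>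
    split_ifs <;> simp_all [xPerm_apply_idx0, xPerm_apply_idx1]

theorem xPerm_commute_aPerm {u v w : Fin n} (hu : w ≠ u) (hv : w ≠ v) :
    Commute (xPerm u v) (aPerm w) := by
  rw [Commute, SemiconjBy, xPerm_mul_aPerm, swap_apply_of_ne_of_ne hu hv]

theorem xPerm_commute_yPerm (u v : Fin n) : Commute (xPerm u v) (yPerm u v) := by
  rw [Commute, SemiconjBy, yPerm, ← mul_assoc, xPerm_mul_aPerm, swap_apply_left, mul_assoc,
    xPerm_mul_aPerm, swap_apply_right, ← mul_assoc, (aPerm_commute v u).eq, mul_assoc]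

theorem xPerm_commute_xPerm {u v s t : Fin n} (h : Commute (swap u v) (swap s t)) :
    Commute (xPerm u v) (xPerm s t) := by
  refine Perm.ext_idx (fun w => ?_) (fun w => ?_)
  · simp only [Perm.mul_apply, xPerm_apply_idx0]
    exact congrArg idx0 (Perm.congr_fun h.eq w)
  · simp only [Perm.mul_apply, xPerm_apply_idx1]
    exact congrArg idx1 (Perm.congr_fun h.eq w)

end Relations

section Constraints

variable {n : ℕ}

theorem yPerm_mul_self (u v : Fin n) : yPerm u v * yPerm u v = 1 :=
  (aPerm_commute u v).mul_self_eq_one (aPerm_mul_self u) (aPerm_mul_self v)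

theorem zPerm_mul_self (u v : Fin n) : zPerm u v * zPerm u v = 1 :=
  (xPerm_commute_yPerm u v).mul_self_eq_one (xPerm_mul_self u v) (yPerm_mul_self u v)

variable {u v s t : Fin n}

theorem xPerm_commute_zPerm (hus : u ≠ s) (hut : u ≠ t) (hvs : v ≠ s) (hvt : v ≠ t) :
    Commute (xPerm u v) (zPerm s t) :=
  (xPerm_commute_xPerm (swap_commute_swap hus hut hvs hvt)).mul_right
    ((xPerm_commute_aPerm hus.symm hvs.symm).mul_right (xPerm_commute_aPerm hut.symm hvt.symm))

theorem bPerm_mul_self (hus : u ≠ s) (hut : u ≠ t) (hvs : v ≠ s) (hvt : v ≠ t) :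
    bPerm u v s t * bPerm u v s t = 1 :=
  (xPerm_commute_xPerm (swap_commute_swap hus hut hvs hvt)).mul_self_eq_one
    (xPerm_mul_self u v) (xPerm_mul_self s t)

theorem cPerm_mul_self (hus : u ≠ s) (hut : u ≠ t) (hvs : v ≠ s) (hvt : v ≠ t) :
    cPerm u v s t * cPerm u v s t = 1 :=
  (xPerm_commute_zPerm hus hut hvs hvt).mul_self_eq_one (xPerm_mul_self u v)
    (zPerm_mul_self s t)

theorem bPerm_triangle (h : Dist4 u v s t) :
    bPerm u v s t * bPerm v s u t * bPerm s u v t = 1 := by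
  obtain ⟨huv, hus, hut, hvs, hvt, hst⟩ := h
  have klein := Perm.congr_fun (prod_doubleTranspositions_eq_one huv hus hut hvs hvt hst)
  refine Perm.ext_idx (fun w => ?_) (fun w => ?_)
  · simp only [bPerm, Perm.mul_apply, xPerm_apply_idx0, Perm.one_apply]
    exact congrArg idx0 (klein w)
  · simp only [bPerm, Perm.mul_apply, xPerm_apply_idx1, Perm.one_apply]
    exact congrArg idx1 (klein w)

theorem cPerm_triangle (h : Dist4 u v s t) :
    cPerm u v s t * cPerm v s u t * cPerm s u v t = 1 := by
  obtain ⟨huv, hus, hut, hvs, hvt, hst⟩ := h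
  refine Perm.ext_idx (fun w => ?_) (fun w => ?_) <;>
    simp only [cPerm, zPerm, yPerm, Perm.mul_apply, Perm.one_apply] <;>
    by_cases hwu : w = u <;> by_cases hwv : w = v <;> by_cases hws : w = s <;>
    by_cases hwt : w = t <;>
    simp_all [xPerm_apply_idx0, xPerm_apply_idx1, aPerm_apply_idx0, aPerm_apply_idx1,
      swap_apply_def, eq_comm]

theorem bPerm_triangle_pairwise_commute (h : Dist4 u v s t) :
    List.Pairwise Commute [bPerm u v s t, bPerm v s u t, bPerm s u v t] := by
  obtain ⟨huv, hus, hut, hvs, hvt, hst⟩ := h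
  exact pairwise_commute_of_mul_mul_eq_one (bPerm_mul_self hus hut hvs hvt)
    (bPerm_mul_self huv.symm hvt hus.symm hst) (bPerm_mul_self hvs.symm hst huv hut)
    (bPerm_triangle ⟨huv, hus, hut, hvs, hvt, hst⟩)

theorem cPerm_triangle_pairwise_commute (h : Dist4 u v s t) :
    List.Pairwise Commute [cPerm u v s t, cPerm v s u t, cPerm s u v t] := by
  obtain ⟨huv, hus, hut, hvs, hvt, hst⟩ := h
  exact pairwise_commute_of_mul_mul_eq_one (cPerm_mul_self hus hut hvs hvt)
    (cPerm_mul_self huv.symm hvt hus.symm hst) (cPerm_mul_self hvs.symm hst huv hut)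
    (cPerm_triangle ⟨huv, hus, hut, hvs, hvt, hst⟩)

end Constraints

section Jperm

variable {n : ℕ}

theorem noncommProd_aPerm_apply_of_notMem {s : Finset (Fin n)} {w : Fin n} (hw : w ∉ s)
    {k : Fin (2 * n)} (hk : k = idx0 w ∨ k = idx1 w)
    (comm : (s : Set (Fin n)).Pairwise (Function.onFun Commute aPerm)) :
    s.noncommProd aPerm comm k = k := by
  refine noncommProd_induction _ _ _ (fun g : Perm (Fin (2 * n)) => g k = k)
    (fun f g hf hg => by rw [Perm.mul_apply, hg, hf]) rfl fun v hv => ?_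
  have hwv : w ≠ v := fun h => hw (h ▸ hv)
  rcases hk with rfl | rfl
  · rw [aPerm_apply_idx0, if_neg hwv]
  · rw [aPerm_apply_idx1, if_neg hwv]

theorem list_prod_ofFn_aPerm : (List.ofFn aPerm).prod = Jperm n := by
  have comm (s : Finset (Fin n)) : (s : Set (Fin n)).Pairwise (Function.onFun Commute aPerm) :=
    fun u _ v _ _ => aPerm_commute u v
  have hprod : (List.ofFn aPerm).prod = univ.noncommProd aPerm (comm univ) := by
    simp only [Finset.noncommProd, Fin.univ_val_map, Multiset.noncommProd_coe]
  refine Perm.ext_idx (fun w => ?_) (fun w => ?_) <;>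
    rw [hprod, ← mul_noncommProd_erase _ (mem_univ w) aPerm (comm _) (comm _), Perm.mul_apply]
  · rw [noncommProd_aPerm_apply_of_notMem (notMem_erase w univ) (Or.inl rfl), aPerm_apply_idx0,
      if_pos rfl, Jperm_apply_idx0]
  · rw [noncommProd_aPerm_apply_of_notMem (notMem_erase w univ) (Or.inr rfl), aPerm_apply_idx1,
      if_pos rfl, Jperm_apply_idx1]

theorem Jperm_ne_one (hn : 0 < n) : Jperm n ≠ 1 := fun h => by
  have := Perm.congr_fun h (idx0 ⟨0, hn⟩)
  rw [Jperm_apply_idx0, Perm.one_apply] at this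
  exact idx0_ne_idx1 _ _ this.symm

end Jperm

theorem stmt11 (n : ℕ) (hn : 4 ≤ n) :
    (∀ u v : Fin n, u ≠ v → aPerm u * aPerm v * yPerm u v = 1 ∧
        List.Pairwise Commute [aPerm u, aPerm v, yPerm u v]) ∧
    (∀ u v : Fin n, u ≠ v → xPerm u v * yPerm u v * zPerm u v = 1 ∧
        List.Pairwise Commute [xPerm u v, yPerm u v, zPerm u v]) ∧
    (∀ u v s t : Fin n, Dist4 u v s t → xPerm u v * xPerm s t * bPerm u v s t = 1 ∧
        List.Pairwise Commute [xPerm u v, xPerm s t, bPerm u v s t]) ∧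
    (∀ u v s t : Fin n, Dist4 u v s t → xPerm u v * zPerm s t * cPerm u v s t = 1 ∧
        List.Pairwise Commute [xPerm u v, zPerm s t, cPerm u v s t]) ∧
    (∀ u v s t : Fin n, Dist4 u v s t →
        bPerm u v s t * bPerm v s u t * bPerm s u v t = 1 ∧
        List.Pairwise Commute [bPerm u v s t, bPerm v s u t, bPerm s u v t]) ∧
    (∀ u v s t : Fin n, Dist4 u v s t →
        cPerm u v s t * cPerm v s u t * cPerm s u v t = 1 ∧
        List.Pairwise Commute [cPerm u v s t, cPerm v s u t, cPerm s u v t]) ∧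
    ((List.ofFn fun v : Fin n => aPerm v).prod = Jperm n ∧
        ∀ u v : Fin n, Commute (aPerm u) (aPerm v)) ∧
    Jperm n ≠ 1 := by
  refine ⟨fun u v _ => ?_, fun u v _ => ?_, fun u v s t h => ?_, fun u v s t h => ?_,
    fun u v s t h => ⟨bPerm_triangle h, bPerm_triangle_pairwise_commute h⟩,
    fun u v s t h => ⟨cPerm_triangle h, cPerm_triangle_pairwise_commute h⟩,
    ⟨list_prod_ofFn_aPerm, aPerm_commute⟩, Jperm_ne_one (by omega)⟩
  · exact (aPerm_commute u v).mul_self_eq_one_and_pairwise_commute (aPerm_mul_self u)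
      (aPerm_mul_self v)
  · exact (xPerm_commute_yPerm u v).mul_self_eq_one_and_pairwise_commute (xPerm_mul_self u v)
      (yPerm_mul_self u v)
  · obtain ⟨-, hus, hut, hvs, hvt, -⟩ := h
    have hxx := xPerm_commute_xPerm (swap_commute_swap hus hut hvs hvt)
    exact hxx.mul_self_eq_one_and_pairwise_commute (xPerm_mul_self u v) (xPerm_mul_self s t)
  · obtain ⟨-, hus, hut, hvs, hvt, -⟩ := h
    exact (xPerm_commute_zPerm hus hut hvs hvt).mul_self_eq_one_and_pairwise_commute
      (xPerm_mul_self u v) (zPerm_mul_self s t)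
end

section
/- If a linear binary constraint system (a family of constraints Π_{i∈S_j} v_i = c_j with c_j ∈ {+1,−1}) admits a solution by 2×2 Hermitian involutions (single-qubit operator observables with pairwise commutation within constraints), then it admits a classical solution over {+1,−1}. -/
/-!
A 2×2 involution over a field of characteristic `≠ 2` is either `±1` or traceless (Cayley–Hamilton),
and two commuting traceless involutions `M, N` satisfy `2 + 2MN = (M + N)² = -det (M + N)`, so
`MN` is a scalar involution and `M = ±N`. Hence the operators of one constraint lie in
`{±1, ±N}` for a single `N`. Give every matrix a sign that is odd under `M ↦ -M` and equals `1`
at `1`, and take an eigenvector `x` of `N` for the eigenvalue `sign N`: every operator of the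
constraint acts on `x` by its sign, so applying the operator identity of the constraint to `x`
yields the classical one.
-/

section NegPairSign

variable {α : Type*} [InvolutiveNeg α] [One α]

-- Choosing `1` for the pair `{1, -1}` makes `negPairSign` equal `±1` at `±1`.
open Classical in
noncomputable def negPairRep (x : α) : α :=
  if x = 1 ∨ x = -1 then 1 else @Classical.epsilon α ⟨x⟩ (· ∈ ({x, -x} : Set α))

open Classical in
noncomputable def negPairSign (x : α) : ℤ := if negPairRep x = x then 1 else -1

theorem negPairRep_neg (x : α) : negPairRep (-x) = negPairRep x := by
  have hpm : (-x = 1 ∨ -x = -1) ↔ (x = 1 ∨ x = -1) := by rw [neg_eq_iff_eq_neg, neg_inj, or_comm]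
  classical
  unfold negPairRep
  rw [neg_neg, Set.pair_comm]
  exact if_congr hpm rfl rfl

theorem negPairRep_eq_or_eq_neg (x : α) : negPairRep x = x ∨ negPairRep x = -x := by
  unfold negPairRep
  split_ifs with h
  · rcases h with rfl | rfl
    · exact .inl rfl
    · exact .inr (neg_neg 1).symm
  · exact Classical.epsilon_spec ⟨x, Set.mem_insert x _⟩

theorem negPairSign_eq_one_or_eq_neg_one (x : α) : negPairSign x = 1 ∨ negPairSign x = -1 := by
  unfold negPairSign; split_ifs <;> simp

@[simp]
theorem negPairSign_one : negPairSign (1 : α) = 1 := by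
  simp [negPairSign, negPairRep]

theorem negPairSign_neg {x : α} (hx : x ≠ -x) : negPairSign (-x) = -negPairSign x := by
  unfold negPairSign
  rw [negPairRep_neg]
  rcases negPairRep_eq_or_eq_neg x with h | h <;> rw [h]
  · rw [if_pos rfl, if_neg hx]
  · rw [if_pos rfl, if_neg (Ne.symm hx), neg_neg]

theorem negPairSign_neg_one (h : (1 : α) ≠ -1) : negPairSign (-1 : α) = -1 := by
  rw [negPairSign_neg h, negPairSign_one]

end NegPairSign

namespace Matrix

open Polynomial in
theorem mul_self_eq_trace_smul_sub_det_smul_one {R : Type*} [CommRing R] [Nontrivial R]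
    (M : Matrix (Fin 2) (Fin 2) R) : M * M = M.trace • M - M.det • 1 := by
  have hCH := M.aeval_self_charpoly
  simp only [charpoly_fin_two, map_sub, map_add, aeval_C, map_mul, aeval_X,
    Algebra.algebraMap_eq_smul_one, sq, smul_mul_assoc, one_mul] at hCH
  linear_combination (norm := module) hCH

variable {n K : Type*} [Fintype n] [DecidableEq n] [Field K]

theorem eq_one_or_eq_neg_one_of_smul_one [Nonempty n] {M : Matrix n n K} {a : K}
    (hM : M = a • 1) (hMM : M * M = 1) : M = 1 ∨ M = -1 := by
  obtain ⟨i⟩ := ‹Nonempty n›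
  have ha : a * a = 1 := by
    simpa [hM] using congr_fun₂ hMM i i
  rcases mul_self_eq_one_iff.mp ha with rfl | rfl <;> simp [hM]

theorem ne_neg_of_mul_self_eq_one [Nonempty n] [NeZero (2 : K)] {N : Matrix n n K}
    (hN : N * N = 1) : N ≠ -N := by
  intro h
  have h2 : (2 : K) • N = 0 := by rw [two_smul]; nth_rewrite 1 [h]; exact neg_add_cancel N
  have : N = 0 := (smul_eq_zero.mp h2).resolve_left two_ne_zero
  simp [this] at hN

theorem exists_mulVec_eq_smul_of_mul_self_eq_one {N : Matrix n n K} (hN : N * N = 1) {s : K}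
    (hs : s * s = 1) (hne : N ≠ -(s • 1)) : ∃ x ≠ 0, N *ᵥ x = s • x := by
  obtain ⟨w, hw⟩ : ∃ w, (N + s • 1) *ᵥ w ≠ 0 := by
    by_contra! h
    exact hne (eq_neg_of_add_eq_zero_left (mulVec_injective (funext fun w => by simp [h])))
  have hfactor : (N - s • 1) * (N + s • 1) = 0 := by
    simp [sub_mul, mul_add, hN, smul_sub, smul_smul, hs]
  refine ⟨(N + s • 1) *ᵥ w, hw, ?_⟩
  set x := (N + s • 1) *ᵥ w
  calc N *ᵥ x = (N - s • 1) *ᵥ x + s • x := by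
        rw [sub_mulVec, smul_mulVec, one_mulVec, sub_add_cancel]
    _ = s • x := by rw [mulVec_mulVec, hfactor, zero_mulVec, zero_add]

theorem trace_eq_zero_of_mul_self_eq_one {M : Matrix (Fin 2) (Fin 2) K} (hM : M * M = 1)
    (h1 : M ≠ 1) (h2 : M ≠ -1) : M.trace = 0 := by
  by_contra ht
  have hscalar : M = (M.trace⁻¹ * (1 + M.det)) • 1 := by
    have hCH := M.mul_self_eq_trace_smul_sub_det_smul_one
    rw [hM] at hCH
    rw [mul_smul, eq_inv_smul_iff₀ ht]
    linear_combination (norm := module) -hCH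
  rcases eq_one_or_eq_neg_one_of_smul_one hscalar hM with h | h <;> contradiction

theorem eq_or_eq_neg_of_commute [NeZero (2 : K)] {M N : Matrix (Fin 2) (Fin 2) K}
    (hM : M * M = 1) (hN : N * N = 1) (tM : M.trace = 0) (tN : N.trace = 0)
    (hMN : Commute M N) : M = N ∨ M = -N := by
  have hP : M * N * (M * N) = 1 := by rw [hMN.symm.mul_mul_mul_comm, hM, hN, one_mul]
  have hscalar : M * N = ((-(M + N).det - 2) / 2) • 1 := by
    have hCH := (M + N).mul_self_eq_trace_smul_sub_det_smul_one
    rw [trace_add, tM, tN, add_zero, zero_smul, zero_sub, add_mul, mul_add, mul_add, hM, hN,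
      ← hMN.eq] at hCH
    have h2 : (2 : K) * 2⁻¹ = 1 := mul_inv_cancel₀ two_ne_zero
    linear_combination (norm := module) (2⁻¹ : K) • hCH - h2 • (M * N)
  have hMPN : M = M * N * N := by rw [mul_assoc, hN, mul_one]
  rcases eq_one_or_eq_neg_one_of_smul_one hscalar hP with h | h <;> rw [h] at hMPN
  · exact .inl (by simpa using hMPN)
  · exact .inr (by simpa using hMPN)

theorem list_prod_map_mulVec_eq_smul {ι R : Type*} [CommRing R] {A : ι → Matrix n n R}
    {v : ι → R} {x : n → R} {L : List ι} (h : ∀ i ∈ L, A i *ᵥ x = v i • x) :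
    (L.map A).prod *ᵥ x = (L.map v).prod • x := by
  induction L with
  | nil => simp
  | cons i L ih =>
    simp only [List.map_cons, List.prod_cons, ← mulVec_mulVec, List.forall_mem_cons] at h ⊢
    rw [ih h.2, mulVec_smul, h.1, smul_smul, mul_comm]

theorem exists_common_eigenvector_negPairSign [NeZero (2 : K)]
    {T : Set (Matrix (Fin 2) (Fin 2) K)} (hinv : ∀ M ∈ T, M * M = 1)
    (hcomm : ∀ M ∈ T, ∀ M' ∈ T, Commute M M') :
    ∃ x ≠ 0, ∀ M ∈ T, M *ᵥ x = (negPairSign M : K) • x := by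
  have hsign_neg_one : negPairSign (-1 : Matrix (Fin 2) (Fin 2) K) = -1 :=
    negPairSign_neg_one (ne_neg_of_mul_self_eq_one (one_mul 1))
  have hscalar_mulVec (x : Fin 2 → K) {M : Matrix (Fin 2) (Fin 2) K} (hM : M = 1 ∨ M = -1) :
      M *ᵥ x = (negPairSign M : K) • x := by
    rcases hM with rfl | rfl
    · rw [negPairSign_one, one_mulVec, Int.cast_one, one_smul]
    · rw [hsign_neg_one, neg_mulVec, one_mulVec, Int.cast_neg, Int.cast_one, neg_one_smul]
  by_cases hscalar : ∀ M ∈ T, M = 1 ∨ M = -1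
  · exact ⟨Pi.single 0 1, by simp, fun M hM => hscalar_mulVec _ (hscalar M hM)⟩
  push Not at hscalar
  obtain ⟨N, hNT, hN1, hN1'⟩ := hscalar
  have tN := trace_eq_zero_of_mul_self_eq_one (hinv N hNT) hN1 hN1'
  obtain ⟨x, hx0, hx⟩ : ∃ x ≠ 0, N *ᵥ x = (negPairSign N : K) • x := by
    refine exists_mulVec_eq_smul_of_mul_self_eq_one (hinv N hNT) ?_ ?_ <;>
      rcases negPairSign_eq_one_or_eq_neg_one N with h | h <;> simp [h, hN1, hN1']
  refine ⟨x, hx0, fun M hM => ?_⟩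
  by_cases hM1 : M = 1 ∨ M = -1
  · exact hscalar_mulVec x hM1
  push Not at hM1
  have tM := trace_eq_zero_of_mul_self_eq_one (hinv M hM) hM1.1 hM1.2
  rcases eq_or_eq_neg_of_commute (hinv M hM) (hinv N hNT) tM tN (hcomm M hM N hNT) with rfl | rfl
  · exact hx
  · rw [negPairSign_neg (ne_neg_of_mul_self_eq_one (hinv N hNT)), neg_mulVec, hx]
    push_cast
    rw [neg_smul]

end Matrix

open Matrix

theorem stmt14_general (nv m : ℕ) (S : Fin m → List (Fin nv)) (c : Fin m → ℤ)
    (h : ∃ A : Fin nv → Matrix (Fin 2) (Fin 2) ℂ,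
      (∀ i, (A i).IsHermitian) ∧ (∀ i, A i * A i = 1) ∧
      (∀ j, ∀ i ∈ S j, ∀ i' ∈ S j, Commute (A i) (A i')) ∧
      (∀ j, ((S j).map A).prod = (c j : ℂ) • (1 : Matrix (Fin 2) (Fin 2) ℂ))) :
    ∃ v : Fin nv → ℤ, (∀ i, v i = 1 ∨ v i = -1) ∧
      ∀ j, ((S j).map v).prod = c j := by
  obtain ⟨A, -, hinv, hcomm, hprod⟩ := h
  refine ⟨fun i => negPairSign (A i), fun i => negPairSign_eq_one_or_eq_neg_one _, fun j => ?_⟩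
  obtain ⟨x, hx0, hx⟩ := exists_common_eigenvector_negPairSign (T := A '' {i | i ∈ S j})
    (by rintro _ ⟨i, -, rfl⟩; exact hinv i)
    (by rintro _ ⟨i, hi, rfl⟩ _ ⟨i', hi', rfl⟩; exact hcomm j i hi i' hi')
  have hprod_x := list_prod_map_mulVec_eq_smul (L := S j) fun i hi => hx (A i) ⟨i, hi, rfl⟩
  rw [hprod j, smul_mulVec, one_mulVec] at hprod_x
  rw [← Int.cast_inj (α := ℂ), Int.cast_list_prod, List.map_map]
  exact (smul_left_injective ℂ hx0 hprod_x).symm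

/-- If a linear BCS (constraints `Π_{i∈S_j} v_i = c_j`, `c_j ∈ {±1}`) has a solution by
2×2 Hermitian involutions commuting within each constraint, then it has a classical
solution over `{±1}`. -/
theorem stmt14 (nv m : ℕ) (S : Fin m → List (Fin nv)) (c : Fin m → ℤ)
    (hc : ∀ j, c j = 1 ∨ c j = -1)
    (h : ∃ A : Fin nv → Matrix (Fin 2) (Fin 2) ℂ,
      (∀ i, (A i).IsHermitian) ∧ (∀ i, A i * A i = 1) ∧
      (∀ j, ∀ i ∈ S j, ∀ i' ∈ S j, Commute (A i) (A i')) ∧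
      (∀ j, ((S j).map A).prod = (c j : ℂ) • (1 : Matrix (Fin 2) (Fin 2) ℂ))) :
    ∃ v : Fin nv → ℤ, (∀ i, v i = 1 ∨ v i = -1) ∧
      ∀ j, ((S j).map v).prod = c j :=
  stmt14_general nv m S c h
end
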